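/- arXiv:2509.14811 — 4 statements merged into one kernel-verified Lean document; each statement's English description precedes it below -/
import Mathlib

section
/- (Almost-everywhere form of Lemma 4.1.) Let Ω ⊂ ℝ^N be measurable, let p > 1, α, β > 0, and let h : Ω → [0,∞) be measurable and finite almost everywhere. Let a : Ω × ℝ × ℝ^d → ℝ^d be such that (s,ξ) ↦ a(x,s,ξ) is continuous for a.e. x ∈ Ω and, for a.e. x ∈ Ω, every s ∈ ℝ and every ξ ≠ η ∈ ℝ^d: a(x,s,ξ)·ξ ≥ α|ξ|^p, |a(x,s,ξ)| ≤ β(h(x) + |s|^{p−1} + |ξ|^{p−1}), and (a(x,s,ξ) − a(x,s,η))·(ξ − η) > 0. Let (u_n) and u be real-valued measurable functions on Ω with u_n → u a.e., and let (V_n) and V be measurable ℝ^d-valued functions on Ω such that [a(x,u_n(x),V_n(x)) − a(x,u(x),V(x))]·(V_n(x) − V(x)) → 0 for a.e. x ∈ Ω. Then V_n → V a.e. in Ω. -/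
open MeasureTheory Filter
open scoped RealInnerProductSpace

/-!
Fix a point `x` where all hypotheses hold. Coercivity and the growth bound turn the
boundedness of the monotonicity expression into `α ‖V_n‖^p ≤ A + B ‖V_n‖^(p-1) + C ‖V_n‖`,
so `(V_n x)` stays in a compact ball. At any cluster point `L`, continuity of `a` turns
the vanishing of the monotonicity expression into `⟪a(u, L) - a(u, V), L - V⟫ = 0`,
and strict monotonicity forces `L = V`; a sequence in a compact set with a unique
cluster point converges to it.
-/

theorem Real.isLittleO_rpow_rpow_atTop {r s : ℝ} (hrs : r < s) :
    (fun x : ℝ => x ^ r) =o[atTop] fun x => x ^ s := by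
  refine (Asymptotics.isLittleO_iff_tendsto' ?_).2 ?_
  · filter_upwards [eventually_gt_atTop 0] with x hx hxs
    exact absurd hxs (Real.rpow_pos_of_pos hx s).ne'
  · refine (tendsto_rpow_neg_atTop (sub_pos.2 hrs)).congr' ?_
    filter_upwards [eventually_gt_atTop 0] with x hx
    rw [neg_sub, ← Real.rpow_sub hx]

theorem eventually_lt_mul_rpow_atTop {p α : ℝ} (hp : 1 < p) (hα : 0 < α) (A B C : ℝ) :
    ∀ᶠ t in atTop, A + B * t ^ (p - 1) + C * t < α * t ^ p := by
  have hlow : (fun t : ℝ => A + B * t ^ (p - 1) + C * t) =o[atTop] fun t => t ^ p := by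
    have hconst := Real.isLittleO_rpow_rpow_atTop (by linarith : (0 : ℝ) < p)
    have hlin := Real.isLittleO_rpow_rpow_atTop hp
    have hpow := Real.isLittleO_rpow_rpow_atTop (by linarith : p - 1 < p)
    simp only [Real.rpow_zero, Real.rpow_one] at hconst hlin
    exact ((hconst.const_mul_left A).add (hpow.const_mul_left B)).add (hlin.const_mul_left C)
      |>.congr_left fun t => by simp
  filter_upwards [hlow.def (half_pos hα), eventually_gt_atTop 0] with t hle ht
  have htp : 0 < t ^ p := Real.rpow_pos_of_pos ht p
  rw [Real.norm_of_nonneg htp.le] at hle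
  calc A + B * t ^ (p - 1) + C * t ≤ α / 2 * t ^ p := (Real.le_norm_self _).trans hle
    _ < α * t ^ p := mul_lt_mul_of_pos_right (half_lt_self hα) htp

section Coercive

variable {E : Type*} [NormedAddCommGroup E] [InnerProductSpace ℝ E]

theorem exists_norm_le_of_coercive_of_growth {p α : ℝ} (hp : 1 < p) (hα : 0 < α)
    (β c K : ℝ) (F W : E) :
    ∃ M, ∀ ξ y : E, α * ‖ξ‖ ^ p ≤ ⟪y, ξ⟫ → ‖y‖ ≤ c + β * ‖ξ‖ ^ (p - 1) →
      ⟪y - F, ξ - W⟫ ≤ K → ‖ξ‖ ≤ M := by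
  obtain ⟨M, hM⟩ := eventually_atTop.1 <|
    eventually_lt_mul_rpow_atTop hp hα (K + c * ‖W‖ + ‖F‖ * ‖W‖) (β * ‖W‖) ‖F‖
  refine ⟨M, fun ξ y hcoer hgrowth hK => le_of_not_ge fun hξM => (hM _ hξM).not_ge ?_⟩
  have hyW : ⟪y, W⟫ ≤ (c + β * ‖ξ‖ ^ (p - 1)) * ‖W‖ :=
    (real_inner_le_norm y W).trans (mul_le_mul_of_nonneg_right hgrowth (norm_nonneg W))
  have hFξ : ⟪F, ξ - W⟫ ≤ ‖F‖ * (‖ξ‖ + ‖W‖) :=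
    (real_inner_le_norm F _).trans (mul_le_mul_of_nonneg_left (norm_sub_le ξ W) (norm_nonneg F))
  calc α * ‖ξ‖ ^ p ≤ ⟪y, ξ⟫ := hcoer
    _ = ⟪y - F, ξ - W⟫ + ⟪y, W⟫ + ⟪F, ξ - W⟫ := by
      simp only [inner_sub_left, inner_sub_right]; ring
    _ ≤ K + (c + β * ‖ξ‖ ^ (p - 1)) * ‖W‖ + ‖F‖ * (‖ξ‖ + ‖W‖) := by gcongr
    _ = K + c * ‖W‖ + ‖F‖ * ‖W‖ + β * ‖W‖ * ‖ξ‖ ^ (p - 1) + ‖F‖ * ‖ξ‖ := by ring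

theorem tendsto_of_tendsto_inner_sub_sub_zero [ProperSpace E] {p α β h : ℝ} (hp : 1 < p)
    (hα : 0 < α) (a : ℝ → E → E) (ha_cont : Continuous fun sξ : ℝ × E => a sξ.1 sξ.2)
    (ha_coer : ∀ s ξ, α * ‖ξ‖ ^ p ≤ ⟪a s ξ, ξ⟫)
    (ha_growth : ∀ s ξ, ‖a s ξ‖ ≤ β * (h + |s| ^ (p - 1) + ‖ξ‖ ^ (p - 1)))
    (ha_mono : ∀ s ξ η, ξ ≠ η → 0 < ⟪a s ξ - a s η, ξ - η⟫)
    {v : ℕ → ℝ} {v₀ : ℝ} (hv : Tendsto v atTop (nhds v₀)) {W : ℕ → E} {W₀ : E}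
    (hW : Tendsto (fun n => ⟪a (v n) (W n) - a v₀ W₀, W n - W₀⟫) atTop (nhds 0)) :
    Tendsto W atTop (nhds W₀) := by
  obtain ⟨c, hc⟩ : ∃ c, ∀ n, β * (h + |v n| ^ (p - 1)) ≤ c :=
    ((hv.abs.rpow_const (Or.inr (by linarith))).const_add h |>.const_mul β).bddAbove_range
      |>.imp fun c hc n => hc ⟨n, rfl⟩
  obtain ⟨K, hK⟩ := hW.bddAbove_range
  obtain ⟨M, hM⟩ := exists_norm_le_of_coercive_of_growth hp hα β c K (a v₀ W₀) W₀
  have hWM : ∀ n, W n ∈ Metric.closedBall 0 M := fun n => by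
    refine mem_closedBall_zero_iff.2 <| hM _ _ (ha_coer _ _) ?_ (hK ⟨n, rfl⟩)
    linarith [ha_growth (v n) (W n), hc n]
  refine (isCompact_closedBall 0 M).tendsto_nhds_of_unique_mapClusterPt
    (Eventually.of_forall hWM) fun L _ hL => ?_
  obtain ⟨φ, hφ, hWφ⟩ := hL.tendsto_subseq
  have hlim : Tendsto (fun n => ⟪a (v (φ n)) (W (φ n)) - a v₀ W₀, W (φ n) - W₀⟫) atTop
      (nhds ⟪a v₀ L - a v₀ W₀, L - W₀⟫) :=
    ((ha_cont.tendsto (v₀, L)).comp ((hv.comp hφ.tendsto_atTop).prodMk_nhds hWφ)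
      |>.sub_const _).inner (hWφ.sub_const W₀)
  have hzero : ⟪a v₀ L - a v₀ W₀, L - W₀⟫ = 0 :=
    tendsto_nhds_unique hlim (hW.comp hφ.tendsto_atTop)
  by_contra hne
  exact (ha_mono v₀ L W₀ hne).ne' hzero

end Coercive

theorem stmt_6_general {N d : ℕ} (Ω : Set (Fin N → ℝ))
    (p α β : ℝ) (hp : 1 < p) (hα : 0 < α)
    (h : (Fin N → ℝ) → ℝ)
    (a : (Fin N → ℝ) → ℝ → EuclideanSpace ℝ (Fin d) → EuclideanSpace ℝ (Fin d))
    (ha : ∀ᵐ x ∂(volume.restrict Ω),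
      Continuous (fun sξ : ℝ × EuclideanSpace ℝ (Fin d) => a x sξ.1 sξ.2) ∧
      (∀ (s : ℝ) (ξ : EuclideanSpace ℝ (Fin d)), α * ‖ξ‖ ^ p ≤ ⟪a x s ξ, ξ⟫) ∧
      (∀ (s : ℝ) (ξ : EuclideanSpace ℝ (Fin d)),
        ‖a x s ξ‖ ≤ β * (h x + |s| ^ (p - 1) + ‖ξ‖ ^ (p - 1))) ∧
      (∀ (s : ℝ) (ξ η : EuclideanSpace ℝ (Fin d)), ξ ≠ η →
        0 < ⟪a x s ξ - a x s η, ξ - η⟫))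
    (un : ℕ → (Fin N → ℝ) → ℝ) (u : (Fin N → ℝ) → ℝ)
    (Vn : ℕ → (Fin N → ℝ) → EuclideanSpace ℝ (Fin d))
    (V : (Fin N → ℝ) → EuclideanSpace ℝ (Fin d))
    (huconv : ∀ᵐ x ∂(volume.restrict Ω),
      Tendsto (fun n => un n x) atTop (nhds (u x)))
    (hmonot : ∀ᵐ x ∂(volume.restrict Ω),
      Tendsto (fun n => ⟪a x (un n x) (Vn n x) - a x (u x) (V x), Vn n x - V x⟫)
        atTop (nhds 0)) :
    ∀ᵐ x ∂(volume.restrict Ω), Tendsto (fun n => Vn n x) atTop (nhds (V x)) := by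
  filter_upwards [ha, huconv, hmonot] with x ⟨hcont, hcoer, hgrowth, hmono⟩ hux hmx
  exact tendsto_of_tendsto_inner_sub_sub_zero hp hα (a x) hcont hcoer hgrowth hmono hux hmx

/-- Almost-everywhere form of Lemma 4.1: a.e. convergence of gradients from
the a.e. vanishing of the monotonicity expression. -/
theorem stmt_6 {N d : ℕ} (Ω : Set (Fin N → ℝ)) (hΩ : MeasurableSet Ω)
    (p α β : ℝ) (hp : 1 < p) (hα : 0 < α) (hβ : 0 < β)
    (h : (Fin N → ℝ) → ℝ) (hh : Measurable h) (hhpos : ∀ x, 0 ≤ h x)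
    (a : (Fin N → ℝ) → ℝ → EuclideanSpace ℝ (Fin d) → EuclideanSpace ℝ (Fin d))
    (ha : ∀ᵐ x ∂(volume.restrict Ω),
      Continuous (fun sξ : ℝ × EuclideanSpace ℝ (Fin d) => a x sξ.1 sξ.2) ∧
      (∀ (s : ℝ) (ξ : EuclideanSpace ℝ (Fin d)), α * ‖ξ‖ ^ p ≤ ⟪a x s ξ, ξ⟫) ∧
      (∀ (s : ℝ) (ξ : EuclideanSpace ℝ (Fin d)),
        ‖a x s ξ‖ ≤ β * (h x + |s| ^ (p - 1) + ‖ξ‖ ^ (p - 1))) ∧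
      (∀ (s : ℝ) (ξ η : EuclideanSpace ℝ (Fin d)), ξ ≠ η →
        0 < ⟪a x s ξ - a x s η, ξ - η⟫))
    (un : ℕ → (Fin N → ℝ) → ℝ) (u : (Fin N → ℝ) → ℝ)
    (hun : ∀ n, Measurable (un n)) (hu : Measurable u)
    (Vn : ℕ → (Fin N → ℝ) → EuclideanSpace ℝ (Fin d))
    (V : (Fin N → ℝ) → EuclideanSpace ℝ (Fin d))
    (hVn : ∀ n, Measurable (Vn n)) (hV : Measurable V)
    (huconv : ∀ᵐ x ∂(volume.restrict Ω),
      Tendsto (fun n => un n x) atTop (nhds (u x)))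
    (hmonot : ∀ᵐ x ∂(volume.restrict Ω),
      Tendsto (fun n => ⟪a x (un n x) (Vn n x) - a x (u x) (V x), Vn n x - V x⟫)
        atTop (nhds 0)) :
    ∀ᵐ x ∂(volume.restrict Ω), Tendsto (fun n => Vn n x) atTop (nhds (V x)) :=
  stmt_6_general Ω p α β hp hα h a ha un u Vn V huconv hmonot
end

section
/- (Pointwise convergence step in the proof of Lemma 4.1.) Let p > 1, α, β > 0, h₀ ≥ 0, and let a : ℝ × ℝ^d → ℝ^d be continuous and satisfy, for all s ∈ ℝ and all ξ ≠ η ∈ ℝ^d: a(s,ξ)·ξ ≥ α|ξ|^p, |a(s,ξ)| ≤ β(h₀ + |s|^{p−1} + |ξ|^{p−1}), and (a(s,ξ) − a(s,η))·(ξ − η) > 0. Let (s_n) ⊂ ℝ and (ξ_n) ⊂ ℝ^d be sequences with s_n → s and [a(s_n,ξ_n) − a(s,ξ)]·(ξ_n − ξ) → 0. Then ξ_n → ξ. -/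
/-!
Coercivity against the growth bound makes `(ξn)` eventually bounded, so it lives in a compact
ball. Along a subsequence converging to a cluster point `η`, continuity of `a` turns the
hypothesis into `⟪a s η - a s ξ, η - ξ⟫ = 0`, and strict monotonicity forces `η = ξ`.
-/

open Filter
open scoped RealInnerProductSpace

lemma exists_forall_le_of_mul_rpow_le {p α : ℝ} (hp : 1 < p) (hα : 0 < α) (A B C : ℝ) :
    ∃ M, ∀ t, α * t ^ p ≤ A + B * t ^ (p - 1) + C * t → t ≤ M := by
  have hfactor : Tendsto (fun t : ℝ => α - B * t ^ (-1 : ℝ) - C * t ^ (-(p - 1)))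
      atTop (nhds α) := by
    simpa using ((tendsto_rpow_neg_atTop one_pos).const_mul B).const_sub α |>.sub
      ((tendsto_rpow_neg_atTop (sub_pos.2 hp)).const_mul C)
  have hlarge := (tendsto_rpow_atTop (by linarith : 0 < p)).atTop_mul_pos hα hfactor
  have hgt : ∀ᶠ t in atTop, A < α * t ^ p - B * t ^ (p - 1) - C * t := by
    filter_upwards [hlarge.eventually_gt_atTop A, eventually_gt_atTop 0] with t ht ht0
    have hpow_sub_one : t ^ p * t ^ (-1 : ℝ) = t ^ (p - 1) := by
      rw [← Real.rpow_add ht0, sub_eq_add_neg]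
    have hpow_one : t ^ p * t ^ (-(p - 1)) = t := by
      rw [← Real.rpow_add ht0, show p + -(p - 1) = 1 by ring, Real.rpow_one]
    linear_combination ht - B * hpow_sub_one - C * hpow_one
  obtain ⟨M, hM⟩ := eventually_atTop.1 hgt
  exact ⟨M, fun t ht => le_of_not_gt fun hMt => by linarith [hM t hMt.le]⟩

lemma real_inner_le_inner_sub_add {E : Type*} [NormedAddCommGroup E] [InnerProductSpace ℝ E]
    (u v x y : E) : ⟪u, x⟫ ≤ ⟪u - v, x - y⟫ + ‖u‖ * ‖y‖ + ‖v‖ * (‖x‖ + ‖y‖) := by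
  have hsplit : ⟪u, x⟫ = ⟪u - v, x - y⟫ + ⟪u, y⟫ + ⟪v, x - y⟫ := by
    simp only [inner_sub_left, inner_sub_right]; ring
  have hv : ⟪v, x - y⟫ ≤ ‖v‖ * (‖x‖ + ‖y‖) :=
    (real_inner_le_norm v _).trans (mul_le_mul_of_nonneg_left (norm_sub_le x y) (norm_nonneg v))
  linarith [real_inner_le_norm u y]

section LerayLions

variable {E ι : Type*} [NormedAddCommGroup E] [InnerProductSpace ℝ E]
  {a : ℝ → E → E} {l : Filter ι} {sn : ι → ℝ} {s : ℝ} {ξn : ι → E} {ξ : E}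

lemma exists_eventually_norm_le_of_tendsto_inner {p α β h₀ : ℝ} (hp : 1 < p) (hα : 0 < α)
    (hell : ∀ s ξ, α * ‖ξ‖ ^ p ≤ ⟪a s ξ, ξ⟫)
    (hgrowth : ∀ s ξ, ‖a s ξ‖ ≤ β * (h₀ + |s| ^ (p - 1) + ‖ξ‖ ^ (p - 1)))
    (hs : Tendsto sn l (nhds s))
    (hconv : Tendsto (fun n => ⟪a (sn n) (ξn n) - a s ξ, ξn n - ξ⟫) l (nhds 0)) :
    ∃ M, ∀ᶠ n in l, ‖ξn n‖ ≤ M := by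
  set G := β * (h₀ + |s| ^ (p - 1)) * ‖ξ‖
  obtain ⟨M, hM⟩ := exists_forall_le_of_mul_rpow_le hp hα
    (G + 1 + ‖a s ξ‖ * ‖ξ‖) (β * ‖ξ‖) ‖a s ξ‖
  have hlower : Tendsto (fun n => ⟪a (sn n) (ξn n) - a s ξ, ξn n - ξ⟫
      + β * (h₀ + |sn n| ^ (p - 1)) * ‖ξ‖) l (nhds (0 + G)) :=
    hconv.add ((((hs.abs.rpow_const (.inr (by linarith))).const_add h₀).const_mul β).mul_const _)
  refine ⟨M, ?_⟩
  filter_upwards [hlower.eventually (eventually_le_nhds (by linarith : 0 + G < G + 1))]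
    with n hn
  apply hM
  have hgrowth_n := mul_le_mul_of_nonneg_right (hgrowth (sn n) (ξn n)) (norm_nonneg ξ)
  linarith [hell (sn n) (ξn n), real_inner_le_inner_sub_add (a (sn n) (ξn n)) (a s ξ) (ξn n) ξ]

lemma inner_sub_eq_zero_of_tendsto [l.NeBot] {η : E}
    (hacont : Continuous (fun sξ : ℝ × E => a sξ.1 sξ.2))
    (hs : Tendsto sn l (nhds s)) (hξ : Tendsto ξn l (nhds η))
    (hconv : Tendsto (fun n => ⟪a (sn n) (ξn n) - a s ξ, ξn n - ξ⟫) l (nhds 0)) :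
    ⟪a s η - a s ξ, η - ξ⟫ = 0 :=
  tendsto_nhds_unique
    ((((hacont.tendsto (s, η)).comp (hs.prodMk_nhds hξ)).sub_const _).inner (hξ.sub_const ξ))
    hconv

end LerayLions

theorem stmt_7_general {d : ℕ} (p α β h₀ : ℝ) (hp : 1 < p) (hα : 0 < α)
    (a : ℝ → EuclideanSpace ℝ (Fin d) → EuclideanSpace ℝ (Fin d))
    (hacont : Continuous (fun sξ : ℝ × EuclideanSpace ℝ (Fin d) => a sξ.1 sξ.2))
    (hell : ∀ (s : ℝ) (ξ : EuclideanSpace ℝ (Fin d)), α * ‖ξ‖ ^ p ≤ ⟪a s ξ, ξ⟫)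
    (hgrowth : ∀ (s : ℝ) (ξ : EuclideanSpace ℝ (Fin d)),
      ‖a s ξ‖ ≤ β * (h₀ + |s| ^ (p - 1) + ‖ξ‖ ^ (p - 1)))
    (hmon : ∀ (s : ℝ) (ξ η : EuclideanSpace ℝ (Fin d)), ξ ≠ η →
      0 < ⟪a s ξ - a s η, ξ - η⟫)
    (sn : ℕ → ℝ) (s : ℝ) (hs : Tendsto sn atTop (nhds s))
    (ξn : ℕ → EuclideanSpace ℝ (Fin d)) (ξ : EuclideanSpace ℝ (Fin d))
    (hconv : Tendsto (fun n => ⟪a (sn n) (ξn n) - a s ξ, ξn n - ξ⟫)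
      atTop (nhds 0)) :
    Tendsto ξn atTop (nhds ξ) := by
  obtain ⟨M, hM⟩ := exists_eventually_norm_le_of_tendsto_inner hp hα hell hgrowth hs hconv
  refine (isCompact_closedBall 0 M).tendsto_nhds_of_unique_mapClusterPt
    (by simpa only [Metric.mem_closedBall, dist_zero_right] using hM) fun η _ hη => ?_
  obtain ⟨ψ, hψ, hξψ⟩ := hη.tendsto_subseq
  have hzero := inner_sub_eq_zero_of_tendsto hacont (hs.comp hψ.tendsto_atTop) hξψ
    (hconv.comp hψ.tendsto_atTop)
  by_contra hne
  exact (hmon s η ξ hne).ne' hzero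

/-- Pointwise convergence step in the proof of Lemma 4.1. -/
theorem stmt_7 {d : ℕ} (p α β h₀ : ℝ) (hp : 1 < p) (hα : 0 < α) (hβ : 0 < β)
    (hh₀ : 0 ≤ h₀)
    (a : ℝ → EuclideanSpace ℝ (Fin d) → EuclideanSpace ℝ (Fin d))
    (hacont : Continuous (fun sξ : ℝ × EuclideanSpace ℝ (Fin d) => a sξ.1 sξ.2))
    (hell : ∀ (s : ℝ) (ξ : EuclideanSpace ℝ (Fin d)), α * ‖ξ‖ ^ p ≤ ⟪a s ξ, ξ⟫)
    (hgrowth : ∀ (s : ℝ) (ξ : EuclideanSpace ℝ (Fin d)),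
      ‖a s ξ‖ ≤ β * (h₀ + |s| ^ (p - 1) + ‖ξ‖ ^ (p - 1)))
    (hmon : ∀ (s : ℝ) (ξ η : EuclideanSpace ℝ (Fin d)), ξ ≠ η →
      0 < ⟪a s ξ - a s η, ξ - η⟫)
    (sn : ℕ → ℝ) (s : ℝ) (hs : Tendsto sn atTop (nhds s))
    (ξn : ℕ → EuclideanSpace ℝ (Fin d)) (ξ : EuclideanSpace ℝ (Fin d))
    (hconv : Tendsto (fun n => ⟪a (sn n) (ξn n) - a s ξ, ξn n - ξ⟫)
      atTop (nhds 0)) :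
    Tendsto ξn atTop (nhds ξ) :=
  stmt_7_general p α β h₀ hp hα a hacont hell hgrowth hmon sn s hs ξn ξ hconv
end

section
/- (Boundedness step in the proof of Lemma 4.1.) Let p > 1, α, β > 0, h₀ ≥ 0, and let a : ℝ × ℝ^d → ℝ^d be continuous and satisfy, for all s ∈ ℝ and all ξ ≠ η ∈ ℝ^d: a(s,ξ)·ξ ≥ α|ξ|^p, |a(s,ξ)| ≤ β(h₀ + |s|^{p−1} + |ξ|^{p−1}), and (a(s,ξ) − a(s,η))·(ξ − η) > 0. Let (s_n) ⊂ ℝ and (ξ_n) ⊂ ℝ^d be sequences with s_n → s and [a(s_n,ξ_n) − a(s,ξ)]·(ξ_n − ξ) → 0. Then the sequence (ξ_n) is bounded in ℝ^d. -/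
/-!
Write `t = ‖ξₙ‖` and `b = a(s, ξ)`. Expanding `⟪a(sₙ, ξₙ), ξₙ⟫` around `⟪a(sₙ, ξₙ) - b, ξₙ - ξ⟫`
and using the growth bound gives `α t ^ p ≤ Aₙ + ‖b‖ t + β ‖ξ‖ t ^ (p - 1)`, where `Aₙ` converges
because `sₙ → s` and the inner product tends to `0`, so it is bounded above. Since `p > 1`,
`t ^ p` eventually dominates any expression `A + B t + D t ^ (p - 1)`, so `t` is bounded.
-/

open Filter Topology
open scoped RealInnerProductSpace

theorem real_inner_le_inner_sub_sub_add {E : Type*} [NormedAddCommGroup E]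
    [InnerProductSpace ℝ E] (u b x y : E) :
    ⟪u, x⟫ ≤ ⟪u - b, x - y⟫ + ‖u‖ * ‖y‖ + ‖b‖ * ‖x‖ + ‖b‖ * ‖y‖ := by
  have hexpand : ⟪u, x⟫ = ⟪u - b, x - y⟫ + ⟪u, y⟫ + ⟪b, x⟫ - ⟪b, y⟫ := by
    simp only [inner_sub_left, inner_sub_right]; ring
  have huy := real_inner_le_norm u y
  have hbx := real_inner_le_norm b x
  have hby := neg_le_of_abs_le (abs_real_inner_le_norm b y)
  linarith

theorem exists_le_of_rpow_le_add {p α : ℝ} (hp : 1 < p) (hα : 0 < α) (A B D : ℝ) :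
    ∃ R, ∀ t : ℝ, α * t ^ p ≤ A + B * t + D * t ^ (p - 1) → t ≤ R := by
  have hlim : Tendsto (fun t : ℝ => A * t ^ (-p) + B * t ^ (-(p - 1)) + D * t ^ (-1 : ℝ))
      atTop (𝓝 0) := by
    have h := ((tendsto_rpow_neg_atTop (by linarith : 0 < p)).const_mul A).add
      ((tendsto_rpow_neg_atTop (by linarith : 0 < p - 1)).const_mul B) |>.add
      ((tendsto_rpow_neg_atTop one_pos).const_mul D)
    simpa using h
  obtain ⟨R, hR⟩ := eventually_atTop.mp (hlim.eventually_lt_const hα)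
  refine ⟨max R 1, fun t ht => ?_⟩
  by_contra! hlt
  have ht₀ : 0 < t := lt_of_lt_of_le one_pos ((le_max_right _ _).trans hlt.le)
  have hfactor : A + B * t + D * t ^ (p - 1) =
      (A * t ^ (-p) + B * t ^ (-(p - 1)) + D * t ^ (-1 : ℝ)) * t ^ p := by
    simp only [add_mul, mul_assoc, ← Real.rpow_add ht₀]
    norm_num [neg_add_eq_sub]
  have hsmall := hR t ((le_max_left _ _).trans hlt.le)
  have hpow : 0 < t ^ p := Real.rpow_pos_of_pos ht₀ p
  linarith [mul_lt_mul_of_pos_right hsmall hpow]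

theorem stmt_8_general {d : ℕ} (p α β h₀ : ℝ) (hp : 1 < p) (hα : 0 < α)
    (a : ℝ → EuclideanSpace ℝ (Fin d) → EuclideanSpace ℝ (Fin d))
    (hell : ∀ (s : ℝ) (ξ : EuclideanSpace ℝ (Fin d)), α * ‖ξ‖ ^ p ≤ ⟪a s ξ, ξ⟫)
    (hgrowth : ∀ (s : ℝ) (ξ : EuclideanSpace ℝ (Fin d)),
      ‖a s ξ‖ ≤ β * (h₀ + |s| ^ (p - 1) + ‖ξ‖ ^ (p - 1)))
    (sn : ℕ → ℝ) (s : ℝ) (hs : Tendsto sn atTop (nhds s))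
    (ξn : ℕ → EuclideanSpace ℝ (Fin d)) (ξ : EuclideanSpace ℝ (Fin d))
    (hconv : Tendsto (fun n => ⟪a (sn n) (ξn n) - a s ξ, ξn n - ξ⟫)
      atTop (nhds 0)) :
    ∃ R : ℝ, ∀ n, ‖ξn n‖ ≤ R := by
  set b := a s ξ
  let An : ℕ → ℝ := fun n =>
    ⟪a (sn n) (ξn n) - b, ξn n - ξ⟫ + β * (h₀ + |sn n| ^ (p - 1)) * ‖ξ‖ + ‖b‖ * ‖ξ‖
  have hsn_pow : Tendsto (fun n => |sn n| ^ (p - 1)) atTop (𝓝 (|s| ^ (p - 1))) :=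
    hs.abs.rpow_const (.inr (by linarith))
  have hAn : Tendsto An atTop (𝓝 (0 + β * (h₀ + |s| ^ (p - 1)) * ‖ξ‖ + ‖b‖ * ‖ξ‖)) :=
    (hconv.add (((hsn_pow.const_add h₀).const_mul β).mul_const ‖ξ‖)).add_const _
  obtain ⟨A, hA⟩ := hAn.bddAbove_range
  obtain ⟨R, hR⟩ := exists_le_of_rpow_le_add hp hα A ‖b‖ (β * ‖ξ‖)
  refine ⟨R, fun n => hR _ ?_⟩
  have hAn_le : An n ≤ A := hA ⟨n, rfl⟩
  have hcross : ‖a (sn n) (ξn n)‖ * ‖ξ‖ ≤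
      β * (h₀ + |sn n| ^ (p - 1)) * ‖ξ‖ + β * ‖ξ‖ * ‖ξn n‖ ^ (p - 1) := by
    linarith [mul_le_mul_of_nonneg_right (hgrowth (sn n) (ξn n)) (norm_nonneg ξ)]
  linarith [hell (sn n) (ξn n), real_inner_le_inner_sub_sub_add (a (sn n) (ξn n)) b (ξn n) ξ]

/-- Boundedness step in the proof of Lemma 4.1. -/
theorem stmt_8 {d : ℕ} (p α β h₀ : ℝ) (hp : 1 < p) (hα : 0 < α) (hβ : 0 < β)
    (hh₀ : 0 ≤ h₀)
    (a : ℝ → EuclideanSpace ℝ (Fin d) → EuclideanSpace ℝ (Fin d))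
    (hacont : Continuous (fun sξ : ℝ × EuclideanSpace ℝ (Fin d) => a sξ.1 sξ.2))
    (hell : ∀ (s : ℝ) (ξ : EuclideanSpace ℝ (Fin d)), α * ‖ξ‖ ^ p ≤ ⟪a s ξ, ξ⟫)
    (hgrowth : ∀ (s : ℝ) (ξ : EuclideanSpace ℝ (Fin d)),
      ‖a s ξ‖ ≤ β * (h₀ + |s| ^ (p - 1) + ‖ξ‖ ^ (p - 1)))
    (hmon : ∀ (s : ℝ) (ξ η : EuclideanSpace ℝ (Fin d)), ξ ≠ η →
      0 < ⟪a s ξ - a s η, ξ - η⟫)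
    (sn : ℕ → ℝ) (s : ℝ) (hs : Tendsto sn atTop (nhds s))
    (ξn : ℕ → EuclideanSpace ℝ (Fin d)) (ξ : EuclideanSpace ℝ (Fin d))
    (hconv : Tendsto (fun n => ⟪a (sn n) (ξn n) - a s ξ, ξn n - ξ⟫)
      atTop (nhds 0)) :
    ∃ R : ℝ, ∀ n, ‖ξn n‖ ≤ R :=
  stmt_8_general p α β h₀ hp hα a hell hgrowth sn s hs ξn ξ hconv
end

section
/- (Stampacchia's iteration lemma, Lemma 4.5.) Let ψ : [0,∞) → [0,∞) be a nonincreasing function and suppose there exist M > 0, δ > 1 and γ > 0 such that ψ(h) ≤ M·ψ(k)^δ/(h−k)^γ for all h > k ≥ 0. Then, setting d ≥ 0 by d^γ = M·ψ(0)^{δ−1}·2^{δγ/(δ−1)}, one has ψ(d) = 0. -/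
/-!
Along the levels `kₙ = d (1 - 2⁻ⁿ)`, which increase to `d` with gaps `kₙ₊₁ - kₙ = d 2⁻⁽ⁿ⁺¹⁾`, the
iteration inequality propagates the geometric bound `ψ kₙ ≤ ψ 0 · 2^(-μ n)`, `μ = γ / (δ - 1)`;
the choice of `d` is exactly what makes the induction step an equality. Since `ψ` is nonincreasing,
`0 ≤ ψ d ≤ ψ kₙ` for every `n`, and the right-hand side tends to `0`.
-/

open Real Filter

lemma sub_two_rpow_neg_succ (d t : ℝ) :
    d * (1 - 2 ^ (-(t + 1))) - d * (1 - 2 ^ (-t)) = d * 2 ^ (-(t + 1)) := by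
  have h : (2 : ℝ) ^ (-t) = 2 ^ (-(t + 1)) * 2 := by
    rw [← rpow_add_one two_ne_zero]
    ring_nf
  rw [h]
  ring

lemma mul_one_sub_two_rpow_neg_mem_Icc {d t : ℝ} (hd : 0 ≤ d) (ht : 0 ≤ t) :
    d * (1 - 2 ^ (-t)) ∈ Set.Icc 0 d := by
  have h1 : (2 : ℝ) ^ (-t) ≤ 1 := rpow_le_one_of_one_le_of_nonpos one_le_two (neg_nonpos.2 ht)
  have h0 : (0 : ℝ) ≤ 2 ^ (-t) := by positivity
  constructor <;> nlinarith

lemma stampacchia_step_eq {M a d δ γ : ℝ} (hM : M ≠ 0) (ha : 0 < a) (hd : 0 ≤ d) (hδ : δ ≠ 1)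
    (hdγ : d ^ γ = M * a ^ (δ - 1) * 2 ^ (δ * γ / (δ - 1))) (t : ℝ) :
    M * (a * 2 ^ (-(γ / (δ - 1) * t))) ^ δ / (d * 2 ^ (-(t + 1))) ^ γ
      = a * 2 ^ (-(γ / (δ - 1) * (t + 1))) := by
  have hδ1 : δ - 1 ≠ 0 := sub_ne_zero.2 hδ
  rw [mul_rpow ha.le (by positivity), mul_rpow hd (by positivity), ← rpow_mul (by norm_num),
    ← rpow_mul (by norm_num), hdγ, rpow_sub_one ha.ne']
  field_simp
  rw [← rpow_add two_pos, ← rpow_add two_pos]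
  congr 1
  field_simp
  ring

section Iteration

variable {ψ : ℝ → ℝ} {M δ γ d : ℝ}

lemma stampacchia_level_bound (hnonneg : ∀ k, 0 ≤ k → 0 ≤ ψ k) (hM : 0 < M) (hδ : 1 < δ)
    (hiter : ∀ h k : ℝ, 0 ≤ k → k < h → ψ h ≤ M * ψ k ^ δ / (h - k) ^ γ)
    (hψ0 : 0 < ψ 0) (hd : 0 < d) (hdγ : d ^ γ = M * ψ 0 ^ (δ - 1) * 2 ^ (δ * γ / (δ - 1)))
    (n : ℕ) : ψ (d * (1 - 2 ^ (-(n : ℝ)))) ≤ ψ 0 * 2 ^ (-(γ / (δ - 1) * n)) := by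
  induction n with
  | zero => simp
  | succ n ih =>
    set k : ℝ → ℝ := fun t => d * (1 - 2 ^ (-t))
    have hk : 0 ≤ k n := (mul_one_sub_two_rpow_neg_mem_Icc hd.le n.cast_nonneg).1
    have hgap : k (n + 1) - k n = d * 2 ^ (-((n : ℝ) + 1)) := sub_two_rpow_neg_succ d n
    have hgap_pos : 0 < k (n + 1) - k n := by rw [hgap]; positivity
    push_cast
    calc ψ (k (n + 1)) ≤ M * ψ (k n) ^ δ / (k (n + 1) - k n) ^ γ :=
          hiter _ _ hk (sub_pos.1 hgap_pos)
      _ ≤ M * (ψ 0 * 2 ^ (-(γ / (δ - 1) * n))) ^ δ / (k (n + 1) - k n) ^ γ := by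
          gcongr
          exact hnonneg _ hk
      _ = ψ 0 * 2 ^ (-(γ / (δ - 1) * (n + 1))) := by
          rw [hgap, stampacchia_step_eq hM.ne' hψ0 hd.le hδ.ne' hdγ]

theorem stampacchia_of_pos (hnonneg : ∀ k, 0 ≤ k → 0 ≤ ψ k)
    (hmono : ∀ h k : ℝ, 0 ≤ k → k ≤ h → ψ h ≤ ψ k) (hM : 0 < M) (hδ : 1 < δ) (hγ : 0 < γ)
    (hiter : ∀ h k : ℝ, 0 ≤ k → k < h → ψ h ≤ M * ψ k ^ δ / (h - k) ^ γ)
    (hψ0 : 0 < ψ 0) (hd : 0 < d) (hdγ : d ^ γ = M * ψ 0 ^ (δ - 1) * 2 ^ (δ * γ / (δ - 1))) :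
    ψ d = 0 := by
  have hμ : 0 < γ / (δ - 1) := div_pos hγ (sub_pos.2 hδ)
  have hψd : ∀ n : ℕ, ψ d ≤ ψ 0 * (2 ^ (-(γ / (δ - 1)))) ^ n := fun n => by
    rw [← rpow_natCast, ← rpow_mul zero_le_two, neg_mul]
    obtain ⟨hk0, hkd⟩ := mul_one_sub_two_rpow_neg_mem_Icc hd.le n.cast_nonneg
    exact (hmono _ _ hk0 hkd).trans (stampacchia_level_bound hnonneg hM hδ hiter hψ0 hd hdγ n)
  have hlim : Tendsto (fun n : ℕ => ψ 0 * (2 ^ (-(γ / (δ - 1)))) ^ n) atTop (nhds 0) := by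
    simpa using (tendsto_pow_atTop_nhds_zero_of_lt_one (by positivity)
      (rpow_lt_one_of_one_lt_of_neg one_lt_two (neg_neg_of_pos hμ))).const_mul (ψ 0)
  exact le_antisymm (ge_of_tendsto' hlim hψd) (hnonneg d hd.le)

end Iteration

/-- Stampacchia's iteration lemma (Lemma 4.5). -/
theorem stmt_9 (ψ : ℝ → ℝ) (hnonneg : ∀ k, 0 ≤ k → 0 ≤ ψ k)
    (hmono : ∀ h k : ℝ, 0 ≤ k → k ≤ h → ψ h ≤ ψ k)
    (M δ γ : ℝ) (hM : 0 < M) (hδ : 1 < δ) (hγ : 0 < γ)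
    (hiter : ∀ h k : ℝ, 0 ≤ k → k < h → ψ h ≤ M * ψ k ^ δ / (h - k) ^ γ) :
    ψ ((M * ψ 0 ^ (δ - 1) * 2 ^ (δ * γ / (δ - 1))) ^ (1 / γ)) = 0 := by
  rcases (hnonneg 0 le_rfl).eq_or_lt with hψ0 | hψ0
  · rw [← hψ0, zero_rpow (sub_pos.2 hδ).ne', mul_zero, zero_mul, zero_rpow (by positivity)]
    exact hψ0.symm
  · have hX : 0 < M * ψ 0 ^ (δ - 1) * 2 ^ (δ * γ / (δ - 1)) := by positivity
    exact stampacchia_of_pos hnonneg hmono hM hδ hγ hiter hψ0 (rpow_pos_of_pos hX _)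
      (by rw [one_div, rpow_inv_rpow hX.le hγ.ne'])
end
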